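/- Let T be a threshold graph that is not complete, with largest clique size d, and suppose that all maximal cliques of T have cardinality d (i.e., the clique complex Δ(T) is pure). Then b_i = 1 for every i = 1, …, d−1, and moreover Δ(T) is a matroid complex, i.e., the restriction of the clique complex to every subset of vertices is pure. -/

import Mathlib

open Finset

/-- `G` is chordal: every cycle of length at least 4 has a chord, i.e. an edge
joining two non-consecutive vertices of the cycle. -/
def IsChordal {V : Type*} (G : SimpleGraph V) : Prop :=
  ∀ (n : ℕ), 4 ≤ n → ∀ f : ZMod n → V, Function.Injective f →
    (∀ i : ZMod n, G.Adj (f i) (f (i + 1))) →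
    ∃ i j : ZMod n, i ≠ j ∧ i + 1 ≠ j ∧ j + 1 ≠ i ∧ G.Adj (f i) (f j)

/-- The number of cliques of `G` with exactly `i` vertices. -/
noncomputable def cliqueCount {V : Type*} [Fintype V] (G : SimpleGraph V) (i : ℕ) : ℕ :=
  {s : Finset V | G.IsNClique i s}.ncard

/-- `W(G - Y)`: the number of connected components of the subgraph of `G` induced on the
complement of `Y`. -/
noncomputable def numComponents {V : Type*} [Fintype V] [DecidableEq V] (G : SimpleGraph V)
    (Y : Finset V) : ℕ :=
  Nat.card (G.induce (↑(Yᶜ) : Set V)).ConnectedComponent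

/-- A vertex-cut of `G`: a set of vertices whose removal disconnects `G`. -/
def IsVertexCut {V : Type*} [Fintype V] [DecidableEq V] (G : SimpleGraph V) (Y : Finset V) :
    Prop :=
  ¬ (G.induce (↑(Yᶜ) : Set V)).Connected

/-- The vertex connectivity `κ(G)`: the minimum cardinality of a vertex-cut. -/
noncomputable def vertexConnectivity {V : Type*} [Fintype V] [DecidableEq V]
    (G : SimpleGraph V) : ℕ :=
  sInf {k | ∃ Y : Finset V, IsVertexCut G Y ∧ Y.card = k}

/-- `s` is a maximal clique of `G`. -/
def IsMaxCliqueOf {V : Type*} (G : SimpleGraph V) (s : Finset V) : Prop :=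
  G.IsClique (↑s : Set V) ∧ ∀ t : Finset V, G.IsClique (↑t : Set V) → s ⊆ t → s = t

/-- A dominating `i`-clique of `G`: a set of `i`-cliques such that every maximal clique of
order at least `i` contains some member of the set. -/
def IsDominatingCliqueSet {V : Type*} (G : SimpleGraph V) (i : ℕ)
    (D : Finset (Finset V)) : Prop :=
  (∀ s ∈ D, G.IsNClique i s) ∧
    ∀ t : Finset V, IsMaxCliqueOf G t → i ≤ t.card → ∃ s ∈ D, s ⊆ t

/-- `d_i(G)`: the minimum cardinality of a dominating `i`-clique of `G`. -/
noncomputable def domNum {V : Type*} (G : SimpleGraph V) (i : ℕ) : ℕ :=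
  sInf {k | ∃ D : Finset (Finset V), IsDominatingCliqueSet G i D ∧ D.card = k}

/-- `κ̃(G)`: the maximum cardinality of the intersection of a pair of distinct maximal
cliques of `G`. -/
noncomputable def kappaTilde {V : Type*} [DecidableEq V] (G : SimpleGraph V) : ℕ :=
  sSup {k | ∃ C C' : Finset V, IsMaxCliqueOf G C ∧ IsMaxCliqueOf G C' ∧ C ≠ C' ∧
    (C ∩ C').card = k}

/-- `G` restricted to the vertex set `s` is a threshold graph: it can be built from a
one-vertex graph by repeatedly adding either an isolated vertex or a vertex adjacent to
all existing vertices. -/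
inductive IsThresholdOn {V : Type*} [DecidableEq V] (G : SimpleGraph V) : Finset V → Prop
  | single (v : V) : IsThresholdOn G {v}
  | isolated (s : Finset V) (v : V) (hv : v ∉ s) (hs : IsThresholdOn G s)
      (hiso : ∀ u ∈ s, ¬ G.Adj v u) : IsThresholdOn G (insert v s)
  | dominating (s : Finset V) (v : V) (hv : v ∉ s) (hs : IsThresholdOn G s)
      (hdom : ∀ u ∈ s, G.Adj v u) : IsThresholdOn G (insert v s)

/-- `G` is a threshold graph. -/
def IsThreshold {V : Type*} [Fintype V] [DecidableEq V] (G : SimpleGraph V) : Prop :=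
  IsThresholdOn G Finset.univ

/-- `|C_i(G)|`: the number of maximal cliques of `G` with exactly `i` vertices. -/
noncomputable def maxCliqueCount {V : Type*} [Fintype V] (G : SimpleGraph V) (i : ℕ) : ℕ :=
  {s : Finset V | IsMaxCliqueOf G s ∧ s.card = i}.ncard

/-- `s` is a maximal clique of `G` among the cliques contained in `W`, i.e. a facet of the
restriction of the clique complex of `G` to `W`. -/
def IsMaxCliqueWithin {V : Type*} (G : SimpleGraph V) (W : Finset V) (s : Finset V) : Prop :=
  s ⊆ W ∧ G.IsClique (↑s : Set V) ∧
    ∀ t : Finset V, t ⊆ W → G.IsClique (↑t : Set V) → s ⊆ t → s = t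

/-- The restriction of the clique complex of `G` to `W` is pure: all its facets have the
same cardinality. -/
def PureOn {V : Type*} (G : SimpleGraph V) (W : Finset V) : Prop :=
  ∀ s t : Finset V, IsMaxCliqueWithin G W s → IsMaxCliqueWithin G W t → s.card = t.card

/-! Purity forces the threshold construction to add an isolated vertex only while the graph built
so far has no edge, for otherwise that vertex would be a facet of size one next to a larger one.
Hence the vertices split into a set `A` adjacent to everything and an independent set `B`: the
cliques are the sets meeting `B` in at most one vertex, every induced subgraph has the same shape
(so all facets of the restriction to `W` have size `|A ∩ W| + [B ∩ W ≠ ∅]`), and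
`c_{j+1} = C(k, j+1) + m C(k, j)` with `k = |A|`, `m = |B|`. As
`∑_{j<k} C(k, j+1) x^j = ∑_{j<k} (x+1)^j` and `∑_j C(k, j) x^j = (x+1)^k`, the b-vector is
`(1, …, 1, m)`. -/

theorem sum_range_choose_succ_mul_pow {R : Type*} [CommSemiring R] (k : ℕ) (x : R) :
    ∑ j ∈ range k, (k.choose (j + 1) : R) * x ^ j = ∑ j ∈ range k, (x + 1) ^ j := by
  induction k with
  | zero => simp
  | succ k ih =>
    simp only [Nat.choose_succ_succ, Nat.cast_add, add_mul, sum_add_distrib]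
    rw [sum_range_succ (fun j => (x + 1) ^ j), ← ih,
      sum_range_succ (fun j => (k.choose (j + 1) : R) * x ^ j), Nat.choose_succ_self, add_pow]
    simp only [Nat.cast_zero, zero_mul, add_zero, one_pow, mul_one]
    rw [add_comm]
    congr 1
    exact sum_congr rfl fun j _ => mul_comm _ _

theorem eq_of_forall_sum_mul_pow_eq {R : Type*} [CommRing R] [IsDomain R] [Infinite R]
    {n : ℕ} {e f : ℕ → R}
    (h : ∀ y : R, ∑ j ∈ range n, e j * y ^ j = ∑ j ∈ range n, f j * y ^ j) :
    ∀ j < n, e j = f j := by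
  open Polynomial in
  have key : ∑ j ∈ range n, C (e j) * X ^ j = ∑ j ∈ range n, C (f j) * X ^ j :=
    Polynomial.funext fun y => by simpa [eval_finsetSum] using h y
  intro j hj
  simpa [finsetSum_coeff, coeff_C_mul_X_pow, hj] using congrArg (coeff · j) key

theorem sum_Icc_one_eq_sum_range {M : Type*} [AddCommMonoid M] (n : ℕ) (f : ℕ → M) :
    ∑ i ∈ Icc 1 n, f i = ∑ j ∈ range n, f (j + 1) := by
  rw [← Ico_add_one_right_eq_Icc, sum_Ico_eq_sum_range]
  simp [add_comm]

theorem eq_one_of_sum_mul_add_one_pow_eq (k m : ℕ) (b c : ℕ → ℤ)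
    (hc : ∀ j, c (j + 1) = k.choose (j + 1) + m * k.choose j)
    (hb : ∀ x : ℤ, ∑ i ∈ Icc 1 (k + 1), b i * (x + 1) ^ (i - 1) =
      ∑ i ∈ Icc 1 (k + 1), c i * x ^ (i - 1)) :
    ∀ i, 1 ≤ i → i ≤ k → b i = 1 := by
  have hshift : ∀ y : ℤ, ∑ j ∈ range (k + 1), b (j + 1) * y ^ j =
      ∑ j ∈ range (k + 1), (if j < k then 1 else (m : ℤ)) * y ^ j := by
    intro y
    have h := hb (y - 1)
    simp only [sum_Icc_one_eq_sum_range, Nat.add_sub_cancel, sub_add_cancel, hc, add_mul,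
      mul_assoc, sum_add_distrib, ← mul_sum] at h
    have hchoose_succ : ∑ j ∈ range (k + 1), (k.choose (j + 1) : ℤ) * (y - 1) ^ j =
        ∑ j ∈ range k, y ^ j := by
      rw [sum_range_succ, Nat.choose_succ_self, Nat.cast_zero, zero_mul, add_zero,
        sum_range_choose_succ_mul_pow, sub_add_cancel]
    have hchoose : ∑ j ∈ range (k + 1), (k.choose j : ℤ) * (y - 1) ^ j = y ^ k := by
      rw [← sub_add_cancel y 1, add_pow, add_sub_cancel_right]
      exact sum_congr rfl fun j _ => by ring
    rw [h, hchoose_succ, hchoose, sum_range_succ, if_neg (lt_irrefl k)]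
    exact congrArg₂ _ (sum_congr rfl fun j hj => by simp [mem_range.1 hj]) rfl
  intro i hi1 hik
  have := eq_of_forall_sum_mul_pow_eq hshift (i - 1) (by omega)
  rwa [Nat.sub_add_cancel hi1, if_pos (by omega)] at this

theorem card_powersetCard_union_image_insert {α : Type*} [DecidableEq α] {A B : Finset α}
    (hBA : Disjoint B A) (j : ℕ) :
    (A.powersetCard (j + 1) ∪ (B ×ˢ A.powersetCard j).image fun p => insert p.1 p.2).card =
      A.card.choose (j + 1) + B.card * A.card.choose j := by
  have hnotMem {b : α} {t : Finset α} (hb : b ∈ B) (ht : t ⊆ A) : b ∉ t :=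
    fun h => disjoint_left.1 hBA hb (ht h)
  have hdisj : Disjoint (A.powersetCard (j + 1))
      ((B ×ˢ A.powersetCard j).image fun p => insert p.1 p.2) := by
    rw [disjoint_left]
    intro s hs hs'
    obtain ⟨⟨b, t⟩, hbt, rfl⟩ := mem_image.1 hs'
    simp only [mem_powersetCard, mem_product] at hs hbt
    exact disjoint_left.1 hBA hbt.1 (hs.1 (mem_insert_self b t))
  have hinj : Set.InjOn (fun p : α × Finset α => insert p.1 p.2) ↑(B ×ˢ A.powersetCard j) := by
    rintro ⟨b, t⟩ hbt ⟨b', t'⟩ hbt' h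
    simp only [coe_product, Set.mem_prod, mem_coe, mem_powersetCard] at hbt hbt' h
    obtain rfl : b = b' := (mem_insert.1 (h ▸ mem_insert_self b t)).resolve_right
      (hnotMem hbt.1 hbt'.2.1)
    rw [← erase_insert (hnotMem hbt.1 hbt.2.1), h, erase_insert (hnotMem hbt'.1 hbt'.2.1)]
  rw [card_union_of_disjoint hdisj, card_image_of_injOn hinj, card_product, card_powersetCard,
    card_powersetCard]

section

variable {V : Type*} {G : SimpleGraph V}

theorem exists_isMaxCliqueWithin (G : SimpleGraph V) {W t : Finset V} (htW : t ⊆ W)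
    (ht : G.IsClique (t : Set V)) :
    ∃ u, t ⊆ u ∧ IsMaxCliqueWithin G W u := by
  classical
  obtain ⟨u, hu, hmax⟩ :=
    (W.powerset.filter fun u => t ⊆ u ∧ G.IsClique (u : Set V)).exists_max_image card
      ⟨t, by simp [htW, ht]⟩
  simp only [mem_filter, mem_powerset] at hu hmax
  exact ⟨u, hu.2.1, hu.1, hu.2.2, fun r hrW hr hur =>
    eq_of_subset_of_card_le hur (hmax r ⟨hrW, hu.2.1.trans hur, hr⟩)⟩

theorem isMaxCliqueWithin_univ_iff [Fintype V] {t : Finset V} :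
    IsMaxCliqueWithin G univ t ↔ IsMaxCliqueOf G t := by
  simp [IsMaxCliqueWithin, IsMaxCliqueOf]

variable [DecidableEq V]

theorem IsMaxCliqueWithin.insert_of_forall_adj {s t : Finset V} {v : V} (hv : v ∉ s)
    (hadj : ∀ u ∈ s, G.Adj v u) (ht : IsMaxCliqueWithin G s t) :
    IsMaxCliqueWithin G (insert v s) (insert v t) := by
  obtain ⟨hts, htc, htmax⟩ := ht
  refine ⟨insert_subset_insert v hts, ?_, fun r hrs hrc htr => ?_⟩
  · rw [coe_insert]
    exact htc.insert fun u hu _ => hadj u (hts hu)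
  · have hrv : r.erase v ⊆ s := fun u hu => by
      simpa [(mem_erase.1 hu).1] using hrs (mem_of_mem_erase hu)
    have htr' : t ⊆ r.erase v := fun u hu =>
      mem_erase.2 ⟨fun h => hv (h ▸ hts hu), htr (mem_insert_of_mem hu)⟩
    rw [htmax _ hrv (hrc.subset (by simp)) htr', insert_erase (htr (mem_insert_self v t))]

theorem PureOn.of_insert_of_forall_adj {s : Finset V} {v : V} (hv : v ∉ s)
    (hadj : ∀ u ∈ s, G.Adj v u) (hp : PureOn G (insert v s)) : PureOn G s :=
  fun t t' ht ht' => by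
  have := hp _ _ (ht.insert_of_forall_adj hv hadj) (ht'.insert_of_forall_adj hv hadj)
  rwa [card_insert_of_notMem fun h => hv (ht.1 h), card_insert_of_notMem fun h => hv (ht'.1 h),
    add_left_inj] at this

theorem isMaxCliqueWithin_singleton_insert {s : Finset V} {v : V} (hv : ∀ u ∈ s, ¬ G.Adj v u) :
    IsMaxCliqueWithin G (insert v s) {v} := by
  refine ⟨by simp, by simp, fun r hrs hrc hvr => Subset.antisymm hvr fun x hx => ?_⟩
  by_contra hxv
  rw [mem_singleton] at hxv
  have hxs : x ∈ s := (mem_insert.1 (hrs hx)).resolve_left hxv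
  exact hv x hxs (hrc (hvr (mem_singleton_self v)) hx (Ne.symm hxv))

theorem PureOn.isIndepSet {s : Finset V} {v : V} (hp : PureOn G s)
    (hv : IsMaxCliqueWithin G s {v}) : G.IsIndepSet (s : Set V) := by
  intro x hx y hy hxy hadj
  obtain ⟨t, hxyt, ht⟩ := exists_isMaxCliqueWithin G (W := s) (t := {x, y})
    (by simp_all [insert_subset_iff]) (by simpa using SimpleGraph.isClique_pair.2 fun _ => hadj)
  have h2 := card_le_card hxyt
  rw [card_pair hxy, hp _ _ ht hv, card_singleton] at h2
  omega

theorem IsMaxCliqueWithin.mem_of_isClique_insert {s t : Finset V} {x : V}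
    (ht : IsMaxCliqueWithin G s t) (hx : x ∈ s) (h : G.IsClique (insert x t : Set V)) :
    x ∈ t := by
  rw [ht.2.2 (insert x t) (insert_subset hx ht.1) (by simpa using h) (subset_insert x t)]
  exact mem_insert_self x t

end

section

variable {V : Type*} [DecidableEq V] {G : SimpleGraph V}

structure IsCompleteSplitOn (G : SimpleGraph V) (s A : Finset V) : Prop where
  subset : A ⊆ s
  adj : ∀ a ∈ A, ∀ u ∈ s, u ≠ a → G.Adj a u
  isIndepSet : G.IsIndepSet (s \ A : Finset V)

namespace IsCompleteSplitOn

variable {s A : Finset V}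

theorem insert_of_forall_adj {v : V} (hA : IsCompleteSplitOn G s A)
    (hv : v ∉ s) (hadj : ∀ u ∈ s, G.Adj v u) :
    IsCompleteSplitOn G (insert v s) (insert v A) where
  subset := insert_subset_insert v hA.subset
  adj a ha u hu hua := by
    rcases mem_insert.1 ha with rfl | haA
    · exact hadj u ((mem_insert.1 hu).resolve_left hua)
    · rcases mem_insert.1 hu with rfl | hus
      · exact (hadj a (hA.subset haA)).symm
      · exact hA.adj a haA u hus hua
  isIndepSet := by
    rw [insert_sdiff_insert, sdiff_insert_of_notMem hv]
    exact hA.isIndepSet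

theorem isClique_iff (hA : IsCompleteSplitOn G s A) {t : Finset V} (hts : t ⊆ s) :
    G.IsClique (t : Set V) ↔ (t \ A).card ≤ 1 := by
  rw [card_le_one]
  constructor
  · intro ht x hx y hy
    by_contra hxy
    have hxs := sdiff_subset_sdiff hts le_rfl hx
    have hys := sdiff_subset_sdiff hts le_rfl hy
    exact hA.isIndepSet hxs hys hxy (ht (mem_sdiff.1 hx).1 (mem_sdiff.1 hy).1 hxy)
  · intro h x hx y hy hxy
    by_cases hxA : x ∈ A
    · exact hA.adj x hxA y (hts hy) (Ne.symm hxy)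
    by_cases hyA : y ∈ A
    · exact (hA.adj y hyA x (hts hx) hxy).symm
    exact absurd (h x (mem_sdiff.2 ⟨hx, hxA⟩) y (mem_sdiff.2 ⟨hy, hyA⟩)) hxy

theorem mono (hA : IsCompleteSplitOn G s A) {W : Finset V} (hW : W ⊆ s) :
    IsCompleteSplitOn G W (A ∩ W) where
  subset := inter_subset_right
  adj a ha u hu hua := hA.adj a (mem_inter.1 ha).1 u (hW hu) hua
  isIndepSet := by
    rw [sdiff_inter_self_right]
    exact hA.isIndepSet.mono (coe_subset.2 (sdiff_subset_sdiff hW le_rfl))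

theorem card_of_isMaxCliqueWithin (hA : IsCompleteSplitOn G s A) {t : Finset V}
    (ht : IsMaxCliqueWithin G s t) : t.card = A.card + if (s \ A).Nonempty then 1 else 0 := by
  have hAt : A ⊆ t := fun a ha => ht.mem_of_isClique_insert (hA.subset ha) <| by
    rw [← coe_insert, hA.isClique_iff (insert_subset (hA.subset ha) ht.1),
      insert_sdiff_of_mem _ ha, ← hA.isClique_iff ht.1]
    exact ht.2.1
  rw [← card_sdiff_add_card_eq_card hAt, add_comm]
  congr 1
  split_ifs with hB
  · obtain ⟨b, hb⟩ := hB
    refine le_antisymm ((hA.isClique_iff ht.1).1 ht.2.1) (card_pos.2 ?_)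
    by_contra htA
    rw [not_nonempty_iff_eq_empty, sdiff_eq_empty_iff_subset] at htA
    obtain ⟨hbs, hbA⟩ := mem_sdiff.1 hb
    refine hbA (htA (ht.mem_of_isClique_insert hbs ?_))
    rw [← coe_insert, hA.isClique_iff (insert_subset hbs ht.1), insert_sdiff_of_notMem _ hbA,
      sdiff_eq_empty_iff_subset.2 htA]
    simp
  · rw [not_nonempty_iff_eq_empty] at hB
    exact card_eq_zero.2 (subset_empty.1 (hB ▸ sdiff_subset_sdiff ht.1 le_rfl))

theorem pureOn (hA : IsCompleteSplitOn G s A) : PureOn G s := fun _ _ ht ht' => by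
  rw [hA.card_of_isMaxCliqueWithin ht, hA.card_of_isMaxCliqueWithin ht']

variable [Fintype V]

theorem univ_sdiff_nonempty (hA : IsCompleteSplitOn G univ A) (hG : G ≠ ⊤) :
    (univ \ A).Nonempty := by
  rw [nonempty_iff_ne_empty, Ne, sdiff_eq_empty_iff_subset]
  refine fun hA' => hG (SimpleGraph.ext (funext₂ fun u w => propext ?_))
  exact ⟨SimpleGraph.Adj.ne, fun h => hA.adj u (hA' (mem_univ u)) w (mem_univ w) h.symm⟩

theorem setOf_isNClique_succ_eq (hA : IsCompleteSplitOn G univ A) (j : ℕ) :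
    {s : Finset V | G.IsNClique (j + 1) s} = ↑(A.powersetCard (j + 1) ∪
      ((univ \ A) ×ˢ A.powersetCard j).image fun p => insert p.1 p.2) := by
  ext s
  simp only [Set.mem_ofPred_eq, coe_union, coe_image, Set.mem_union, mem_coe, mem_powersetCard,
    Set.mem_image, mem_product, Prod.exists, SimpleGraph.isNClique_iff,
    hA.isClique_iff (subset_univ _)]
  constructor
  · rintro ⟨hs1, hcard⟩
    rcases Nat.le_one_iff_eq_zero_or_eq_one.1 hs1 with h0 | h1
    · exact Or.inl ⟨sdiff_eq_empty_iff_subset.1 (card_eq_zero.1 h0), hcard⟩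
    · obtain ⟨b, hb⟩ := card_eq_one.1 h1
      have hbA : b ∉ A := (mem_sdiff.1 (hb ▸ mem_singleton_self b : b ∈ s \ A)).2
      have hsplit := card_sdiff_add_card_inter s A
      refine Or.inr
        ⟨b, s ∩ A, ⟨mem_sdiff.2 ⟨mem_univ b, hbA⟩, inter_subset_right, by omega⟩, ?_⟩
      rw [insert_eq, ← hb, sdiff_union_inter]
  · rintro (⟨hsA, hcard⟩ | ⟨b, t, ⟨hb, htA, hcard⟩, rfl⟩)
    · rw [sdiff_eq_empty_iff_subset.2 hsA]
      exact ⟨by simp, hcard⟩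
    · have hbA := (mem_sdiff.1 hb).2
      rw [insert_sdiff_of_notMem _ hbA, sdiff_eq_empty_iff_subset.2 htA,
        card_insert_of_notMem fun h => hbA (htA h), hcard]
      exact ⟨by simp, rfl⟩

theorem cliqueCount_succ (hA : IsCompleteSplitOn G univ A) (j : ℕ) :
    cliqueCount G (j + 1) = A.card.choose (j + 1) + (univ \ A).card * A.card.choose j := by
  rw [cliqueCount, hA.setOf_isNClique_succ_eq, Set.ncard_coe_finset,
    card_powersetCard_union_image_insert disjoint_sdiff_self_left]

end IsCompleteSplitOn

theorem IsThresholdOn.exists_isCompleteSplitOn {s : Finset V} (hs : IsThresholdOn G s)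
    (hp : PureOn G s) : ∃ A, IsCompleteSplitOn G s A := by
  induction hs with
  | single v => exact ⟨∅, empty_subset _, by simp, by simp⟩
  | isolated s v hv _ hiso _ =>
    have hindep := hp.isIndepSet (isMaxCliqueWithin_singleton_insert hiso)
    exact ⟨∅, empty_subset _, by simp, by simpa using hindep⟩
  | dominating s v hv _ hdom ih =>
    obtain ⟨A, hA⟩ := ih (hp.of_insert_of_forall_adj hv hdom)
    exact ⟨insert v A, hA.insert_of_forall_adj hv hdom⟩

end

theorem stmt16_general {V : Type} [Fintype V] [DecidableEq V] (T : SimpleGraph V)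
    (hnc : T ≠ ⊤) (hth : IsThreshold T)
    (d : ℕ)
    (hpure : ∀ s : Finset V, IsMaxCliqueOf T s → s.card = d)
    (b : ℕ → ℤ)
    (hb : ∀ x : ℤ, ∑ i ∈ Finset.Icc 1 d, b i * (x + 1) ^ (i - 1) =
      ∑ i ∈ Finset.Icc 1 d, (cliqueCount T i : ℤ) * x ^ (i - 1)) :
    (∀ i : ℕ, 1 ≤ i → i ≤ d - 1 → b i = 1) ∧
    ∀ W : Finset V, PureOn T W := by
  have hpureOn : PureOn T univ := fun s t hs ht => by
    rw [hpure s (isMaxCliqueWithin_univ_iff.1 hs), hpure t (isMaxCliqueWithin_univ_iff.1 ht)]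
  obtain ⟨A, hA⟩ := IsThresholdOn.exists_isCompleteSplitOn hth hpureOn
  obtain ⟨t, -, ht⟩ := exists_isMaxCliqueWithin T (empty_subset univ) (by simp)
  have hd : d = A.card + 1 := by
    rw [← hpure t (isMaxCliqueWithin_univ_iff.1 ht), hA.card_of_isMaxCliqueWithin ht,
      if_pos (hA.univ_sdiff_nonempty hnc)]
  subst hd
  have hcount (j : ℕ) : (cliqueCount T (j + 1) : ℤ) =
      A.card.choose (j + 1) + (univ \ A).card * A.card.choose j := by
    exact_mod_cast hA.cliqueCount_succ j
  refine ⟨fun i hi1 hik => eq_one_of_sum_mul_add_one_pow_eq _ _ b _ hcount hb i hi1 (by omega),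
    fun W => (hA.mono (subset_univ W)).pureOn⟩

/-- Let `T` be a non-complete threshold graph with largest clique size `d` whose clique
complex is pure (all maximal cliques have cardinality `d`). Then `b i = 1` for every
`1 ≤ i ≤ d - 1`, and the clique complex of `T` is a matroid complex: its restriction to
every subset of vertices is pure. -/
theorem stmt16 {V : Type} [Fintype V] [DecidableEq V] (T : SimpleGraph V)
    (hnc : T ≠ ⊤) (hth : IsThreshold T)
    (d : ℕ) (hd : ∃ s : Finset V, T.IsNClique d s)
    (hdmax : ∀ (m : ℕ) (s : Finset V), T.IsNClique m s → m ≤ d)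
    (hpure : ∀ s : Finset V, IsMaxCliqueOf T s → s.card = d)
    (b : ℕ → ℤ)
    (hb : ∀ x : ℤ, ∑ i ∈ Finset.Icc 1 d, b i * (x + 1) ^ (i - 1) =
      ∑ i ∈ Finset.Icc 1 d, (cliqueCount T i : ℤ) * x ^ (i - 1)) :
    (∀ i : ℕ, 1 ≤ i → i ≤ d - 1 → b i = 1) ∧
    ∀ W : Finset V, PureOn T W :=
  stmt16_general T hnc hth d hpure b hb
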